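/- For every U ∈ D_{p,q} with n = p+q, the product of all 2^n conjugates ∏_{A ⊆ {1,…,n}} U^{(A)} is a scalar (a real multiple of 1), and it equals Det(U) := det(β(U)), the determinant of the regular representation matrix of U. -/

import Mathlib

open Finset
open scoped symmDiff

noncomputable section

/-- Sign of the `i`-th generator: `+1` if `i < p`, `-1` otherwise. -/
def eps (p : ℕ) {n : ℕ} (i : Fin n) : ℝ := if (i : ℕ) < p then 1 else -1

lemma eps_mul_self (p : ℕ) {n : ℕ} (i : Fin n) : eps p i * eps p i = 1 := by
  unfold eps; split <;> norm_num

/-- Structure constant `σ(A,B) = ∏_{i ∈ A ∩ B} ε_i`. -/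
def sgn (p : ℕ) {n : ℕ} (A B : Finset (Fin n)) : ℝ := ∏ i ∈ A ∩ B, eps p i

/-- The commutative analogue of a Clifford algebra `D_{p,q}`, realized as the space of
coefficient functions on the basis `{e_A : A ⊆ {1,…,n}}`, `n = p + q`, with multiplication
`e_A e_B = σ(A,B) e_{A Δ B}`. -/
def Dl (p q : ℕ) : Type := Finset (Fin (p + q)) → ℝ

namespace Dl

variable {p q : ℕ}

instance : AddCommGroup (Dl p q) := Pi.addCommGroup
instance : Module ℝ (Dl p q) := Pi.module _ _ _

/-- Multiplication: `(U·V)_C = ∑_{A Δ B = C} σ(A,B) U_A V_B`. -/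
def mul' (U V : Dl p q) : Dl p q :=
  fun C => ∑ A : Finset (Fin (p + q)), sgn p A (A ∆ C) * U A * V (A ∆ C)

/-- The unit `1 = e_∅`. -/
def one' : Dl p q := fun A => if A = ∅ then 1 else 0

lemma sgn_empty_left {n : ℕ} (B : Finset (Fin n)) : sgn p ∅ B = 1 := by
  simp [sgn]

lemma sgn_empty_right {n : ℕ} (A : Finset (Fin n)) : sgn p A ∅ = 1 := by
  simp [sgn]

lemma sgn_prod_ite {n : ℕ} (X Y : Finset (Fin n)) :
    sgn p X Y = ∏ i : Fin n, (if i ∈ X ∩ Y then eps p i else 1) := by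
  rw [Finset.prod_ite_mem, Finset.univ_inter, sgn]

lemma sgn_cocycle {n : ℕ} (p : ℕ) (A B C : Finset (Fin n)) :
    sgn p B (B ∆ C) * sgn p A (A ∆ B) = sgn p A (A ∆ C) * sgn p (A ∆ B) (B ∆ C) := by
  rw [sgn_prod_ite, sgn_prod_ite, sgn_prod_ite, sgn_prod_ite,
    ← Finset.prod_mul_distrib, ← Finset.prod_mul_distrib]
  refine Finset.prod_congr rfl fun i _ => ?_
  by_cases hA : i ∈ A <;> by_cases hB : i ∈ B <;> by_cases hC : i ∈ C <;>
    simp [Finset.mem_inter, Finset.mem_symmDiff, hA, hB, hC]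

lemma sd_helper {n : ℕ} (A B C : Finset (Fin n)) : (A ∆ B) ∆ (A ∆ C) = B ∆ C := by
  rw [symmDiff_comm A B, symmDiff_assoc, symmDiff_symmDiff_cancel_left]

theorem mul_comm' (U V : Dl p q) : mul' U V = mul' V U := by
  funext C
  refine Fintype.sum_equiv
    (Function.Involutive.toPerm (fun A => A ∆ C)
      (by intro A; exact symmDiff_symmDiff_cancel_right C A)) _ _ fun A => ?_
  try simp only [Function.Involutive.coe_toPerm]
  try simp only [Function.Involutive.toPerm, Equiv.coe_fn_mk]
  rw [symmDiff_symmDiff_cancel_right]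
  rw [show sgn p A (A ∆ C) = sgn p (A ∆ C) A by rw [sgn, sgn, Finset.inter_comm]]
  ring

theorem mul_assoc' (U V W : Dl p q) : mul' (mul' U V) W = mul' U (mul' V W) := by
  funext C
  show ∑ B : Finset (Fin (p+q)), sgn p B (B ∆ C) * (mul' U V) B * W (B ∆ C)
      = ∑ A : Finset (Fin (p+q)), sgn p A (A ∆ C) * U A * (mul' V W) (A ∆ C)
  unfold mul'
  simp only [Finset.sum_mul, Finset.mul_sum]
  rw [Finset.sum_comm]
  refine Finset.sum_congr rfl fun A _ => ?_
  refine Fintype.sum_equiv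
    (Function.Involutive.toPerm (fun B => A ∆ B)
      (by intro B; exact symmDiff_symmDiff_cancel_left A B)) _ _ fun B => ?_
  try simp only [Function.Involutive.coe_toPerm]
  try simp only [Function.Involutive.toPerm, Equiv.coe_fn_mk]
  rw [sd_helper]
  have h := sgn_cocycle p A B C
  linear_combination (U A * V (A ∆ B) * W (B ∆ C)) * h

theorem one_mul' (U : Dl p q) : mul' one' U = U := by
  funext C
  unfold mul' one'
  rw [Finset.sum_eq_single (∅ : Finset (Fin (p+q)))]
  · simp [sgn_empty_left, bot_eq_empty.symm ▸ (bot_symmDiff C : (⊥ : Finset (Fin (p+q))) ∆ C = C)]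
  · intro A _ hA; simp [hA]
  · simp

theorem mul_one' (U : Dl p q) : mul' U one' = U := by
  funext C
  unfold mul' one'
  rw [Finset.sum_eq_single C]
  · simp [sgn, symmDiff_self, bot_eq_empty]
  · intro A _ hA
    have : A ∆ C ≠ ∅ := fun h =>
      hA (symmDiff_eq_bot.mp (by simpa [Finset.bot_eq_empty] using h))
    simp [this]
  · simp

theorem zero_mul' (U : Dl p q) : mul' 0 U = 0 := by
  funext C; unfold mul'
  simp [show ∀ A, (0 : Dl p q) A = 0 from fun _ => rfl]

theorem mul_zero' (U : Dl p q) : mul' U 0 = 0 := by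
  funext C; unfold mul'
  simp [show ∀ A, (0 : Dl p q) A = 0 from fun _ => rfl]

theorem left_distrib' (U V W : Dl p q) : mul' U (V + W) = mul' U V + mul' U W := by
  funext C
  show ∑ A : Finset (Fin (p+q)), sgn p A (A ∆ C) * U A * (V (A ∆ C) + W (A ∆ C))
      = mul' U V C + mul' U W C
  unfold mul'
  rw [← Finset.sum_add_distrib]
  exact Finset.sum_congr rfl fun A _ => by ring

theorem right_distrib' (U V W : Dl p q) : mul' (U + V) W = mul' U W + mul' V W := by
  funext C
  show ∑ A : Finset (Fin (p+q)), sgn p A (A ∆ C) * (U A + V A) * W (A ∆ C)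
      = mul' U W C + mul' V W C
  unfold mul'
  rw [← Finset.sum_add_distrib]
  exact Finset.sum_congr rfl fun A _ => by ring

instance : CommRing (Dl p q) :=
  { (inferInstance : AddCommGroup (Dl p q)) with
    mul := mul'
    one := one'
    left_distrib := left_distrib'
    right_distrib := right_distrib'
    zero_mul := zero_mul'
    mul_zero := mul_zero'
    mul_assoc := mul_assoc'
    one_mul := one_mul'
    mul_one := mul_one'
    mul_comm := mul_comm' }

lemma mul_def (U V : Dl p q) : U * V = mul' U V := rfl
lemma one_def : (1 : Dl p q) = one' := rfl

instance : Algebra ℝ (Dl p q) :=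
  Algebra.ofModule
    (fun r U V => by
      funext C
      show ∑ A : Finset (Fin (p+q)), sgn p A (A ∆ C) * (r * U A) * V (A ∆ C)
          = r * ∑ A : Finset (Fin (p+q)), sgn p A (A ∆ C) * U A * V (A ∆ C)
      rw [Finset.mul_sum]
      exact Finset.sum_congr rfl fun A _ => by ring)
    (fun r U V => by
      funext C
      show ∑ A : Finset (Fin (p+q)), sgn p A (A ∆ C) * U A * (r * V (A ∆ C))
          = r * ∑ A : Finset (Fin (p+q)), sgn p A (A ∆ C) * U A * V (A ∆ C)
      rw [Finset.mul_sum]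
      exact Finset.sum_congr rfl fun A _ => by ring)

/-- The coefficient of the basis element `e_A` in `U`. -/
def coeff (U : Dl p q) (A : Finset (Fin (p + q))) : ℝ := U A

/-- The basis element `e_A`. -/
def e (A : Finset (Fin (p + q))) : Dl p q := fun B => if B = A then 1 else 0

/-- The conjugation negating the generator `e_l`. -/
def conj (l : Fin (p + q)) (U : Dl p q) : Dl p q :=
  fun A => if l ∈ A then -U A else U A

/-- The superposition of the conjugations `(·)^{(i)}` over all `i ∈ S`:
it multiplies the coefficient of `e_B` by `(-1)^{|S ∩ B|}`. -/
def conjS (S : Finset (Fin (p + q))) (U : Dl p q) : Dl p q :=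
  fun B => (-1 : ℝ) ^ (S ∩ B).card * U B

/-- The regular (left multiplication) representation of `D_{p,q}`. -/
def rep (U : Dl p q) : Matrix (Finset (Fin (p + q))) (Finset (Fin (p + q))) ℝ :=
  fun C B => coeff (U * e B) C

/-- The determinant of an element of `D_{p,q}`. -/
def Det (U : Dl p q) : ℝ := (rep U).det

/-- The adjoint: product of all conjugates of `U` other than `U` itself. -/
def Adj (U : Dl p q) : Dl p q := ∏ A ∈ Finset.univ.erase (∅ : Finset (Fin (p + q))), conjS A U

end Dl

/-!
Each `conjS B` is an algebra automorphism of `D_{p,q}` and `conjS B ∘ conjS A = conjS (B ∆ A)`,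
so the product `P` of all conjugates is fixed by every `conjS B`. For `l ∈ C`, `conjS {l}`
negates the coefficient of `e_C`, hence `P` is a scalar. To identify it, send each `e_i` to a
square root of `ε_i` in `ℂ`: this is a character `χ`, and the `2^n` characters `χ ∘ conjS S` are
simultaneous left eigenvectors of the regular representation, their matrix on the basis being a
Walsh–Hadamard matrix times an invertible diagonal one. So `Det U = ∏_S χ (conjS S U) = χ P`.
-/

namespace Finset

variable {α R : Type*} [DecidableEq α]

lemma neg_one_pow_card_symmDiff [Monoid R] [HasDistribNeg R] (X Y : Finset α) :
    (-1 : R) ^ (X ∆ Y).card = (-1) ^ X.card * (-1) ^ Y.card := by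
  have h : X.card + Y.card = (X ∆ Y).card + 2 * (X ∩ Y).card := by
    rw [← card_union_add_card_inter, symmDiff_eq_sup_sdiff_inf, sup_eq_union, inf_eq_inter,
      card_sdiff_of_subset inter_subset_union]
    have := card_le_card (inter_subset_union (s := X) (t := Y))
    omega
  rw [← pow_add, h, pow_add, pow_mul, neg_one_sq, one_pow, mul_one]

lemma neg_one_pow_card_inter_symmDiff [Monoid R] [HasDistribNeg R] (S A B : Finset α) :
    (-1 : R) ^ (S ∩ (A ∆ B)).card = (-1) ^ (S ∩ A).card * (-1) ^ (S ∩ B).card := by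
  rw [← neg_one_pow_card_symmDiff, ← inf_eq_inter, inf_symmDiff_distrib_left]; rfl

lemma sum_neg_one_pow_card_inter [Fintype α] [CommRing R] (D : Finset α) :
    ∑ C : Finset α, (-1 : R) ^ (C ∩ D).card = if D = ∅ then 2 ^ Fintype.card α else 0 := by
  have hprod (C : Finset α) : (-1 : R) ^ (C ∩ D).card = ∏ i ∈ C, if i ∈ D then -1 else 1 := by
    rw [prod_ite_mem, prod_const]
  rw [Fintype.sum_congr _ _ hprod, ← powerset_univ, ← prod_one_add]
  split_ifs with hD
  · simp [hD, one_add_one_eq_two]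
  · obtain ⟨i, hi⟩ := nonempty_iff_ne_empty.mpr hD
    exact prod_eq_zero (mem_univ i) (by simp [hi])

end Finset

namespace Matrix

variable (α R : Type*) [Fintype α] [DecidableEq α] [CommRing R]

def walsh : Matrix (Finset α) (Finset α) R := fun S C => (-1) ^ (S ∩ C).card

lemma walsh_mul_walsh : walsh α R * walsh α R = (2 ^ Fintype.card α : R) • 1 := by
  ext S T
  have h : ∀ C : Finset α, walsh α R S C * walsh α R C T = (-1) ^ (C ∩ (S ∆ T)).card := by
    intro C
    rw [walsh, walsh, neg_one_pow_card_inter_symmDiff, inter_comm S C]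
  rw [mul_apply, Fintype.sum_congr _ _ h, sum_neg_one_pow_card_inter, smul_apply, one_apply,
    smul_eq_mul, mul_ite, mul_one, mul_zero]
  simp only [← bot_eq_empty, symmDiff_eq_bot]

lemma det_walsh_ne_zero [IsDomain R] [NeZero (2 : R)] : (walsh α R).det ≠ 0 := by
  have h := congrArg det (walsh_mul_walsh α R)
  rw [det_mul, det_smul, det_one, mul_one] at h
  intro h0
  rw [h0, mul_zero] at h
  exact pow_ne_zero _ (pow_ne_zero _ two_ne_zero) h.symm

end Matrix

namespace Dl

variable {p q : ℕ}

lemma one_apply (C : Finset (Fin (p + q))) : (1 : Dl p q) C = if C = ∅ then 1 else 0 := rfl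

lemma mul_apply (U V : Dl p q) (C : Finset (Fin (p + q))) :
    (U * V) C = ∑ A, sgn p A (A ∆ C) * U A * V (A ∆ C) := rfl

lemma add_apply (U V : Dl p q) (C : Finset (Fin (p + q))) : (U + V) C = U C + V C := rfl

lemma smul_apply (r : ℝ) (U : Dl p q) (C : Finset (Fin (p + q))) : (r • U) C = r * U C := rfl

lemma sum_apply {ι : Type*} (s : Finset ι) (f : ι → Dl p q) (C : Finset (Fin (p + q))) :
    (∑ i ∈ s, f i) C = ∑ i ∈ s, f i C :=
  Finset.sum_apply (M := fun _ => ℝ) C s f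

lemma sum_smul_e (U : Dl p q) : ∑ C, U C • e C = U := by
  funext B
  simp only [sum_apply, smul_apply, e, mul_ite, mul_one, mul_zero]
  exact Fintype.sum_ite_eq B (U ·)

lemma conjS_one (B : Finset (Fin (p + q))) : conjS B (1 : Dl p q) = 1 := by
  funext C
  rw [conjS, one_apply]
  split_ifs with h <;> simp [h]

lemma conjS_mul (B : Finset (Fin (p + q))) (X Y : Dl p q) :
    conjS B (X * Y) = conjS B X * conjS B Y := by
  funext C
  simp only [conjS, mul_apply, Finset.mul_sum]
  refine Finset.sum_congr rfl fun A _ => ?_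
  rw [← symmDiff_symmDiff_cancel_left A C, neg_one_pow_card_inter_symmDiff,
    symmDiff_symmDiff_cancel_left]
  ring

def conjAlgHom (B : Finset (Fin (p + q))) : Dl p q →ₐ[ℝ] Dl p q :=
  AlgHom.ofLinearMap
    { toFun := conjS B
      map_add' := fun X Y => funext fun C => mul_add _ (X C) (Y C)
      map_smul' := fun r X => funext fun C => mul_left_comm _ r (X C) }
    (conjS_one B) (conjS_mul B)

lemma conjAlgHom_apply (B : Finset (Fin (p + q))) (U : Dl p q) : conjAlgHom B U = conjS B U := rfl

lemma conjS_conjS (B A : Finset (Fin (p + q))) (U : Dl p q) :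
    conjS B (conjS A U) = conjS (B ∆ A) U := by
  funext C
  simp only [conjS, ← mul_assoc, inter_comm _ C, neg_one_pow_card_inter_symmDiff]

lemma conjS_prod_conjS (U : Dl p q) (B : Finset (Fin (p + q))) :
    conjS B (∏ A, conjS A U) = ∏ A, conjS A U := by
  rw [← conjAlgHom_apply, map_prod]
  simp only [conjAlgHom_apply, conjS_conjS]
  exact (symmDiff_right_involutive B).bijective.prod_comp (conjS · U)

lemma eq_smul_one_of_forall_conjS_eq {P : Dl p q} (h : ∀ B, conjS B P = P) : P = P ∅ • 1 := by
  funext C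
  rw [smul_apply, one_apply]
  split_ifs with hC
  · rw [hC, mul_one]
  · obtain ⟨l, hl⟩ := nonempty_iff_ne_empty.mpr hC
    have hneg : -P C = P C := by
      simpa [conjS, singleton_inter_of_mem hl] using congrFun (h {l}) C
    rw [mul_zero]
    linarith

section Lift

variable {R : Type*} [CommRing R] [Algebra ℝ R]

lemma prod_mul_prod_eq_sgn_smul {n : ℕ} {u : Fin n → R}
    (hu : ∀ i, u i ^ 2 = algebraMap ℝ R (eps p i)) (A B : Finset (Fin n)) :
    (∏ i ∈ A, u i) * ∏ i ∈ B, u i = sgn p A B • ∏ i ∈ A ∆ B, u i := by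
  have hAB : A ∆ B = (A ∪ B) \ (A ∩ B) := symmDiff_eq_sup_sdiff_inf A B
  rw [← prod_union_inter, ← prod_sdiff inter_subset_union, ← hAB, mul_assoc,
    ← prod_mul_distrib]
  simp only [← sq, hu]
  rw [← map_prod, sgn, Algebra.smul_def, mul_comm]

variable {u : Fin (p + q) → R}

lemma sum_smul_prod_mul (hu : ∀ i, u i ^ 2 = algebraMap ℝ R (eps p i)) (X Y : Dl p q) :
    ∑ C, (X * Y) C • ∏ i ∈ C, u i
      = (∑ A, X A • ∏ i ∈ A, u i) * ∑ B, Y B • ∏ i ∈ B, u i := by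
  simp only [mul_apply, Finset.sum_smul, sum_mul_sum]
  rw [sum_comm]
  refine sum_congr rfl fun A _ => ?_
  rw [← (symmDiff_right_involutive A).bijective.sum_comp
    (fun B => (X A • ∏ i ∈ A, u i) * Y B • ∏ i ∈ B, u i)]
  refine sum_congr rfl fun C _ => ?_
  rw [smul_mul_smul_comm, prod_mul_prod_eq_sgn_smul hu, symmDiff_symmDiff_cancel_left,
    smul_smul]
  ring_nf

def lift (hu : ∀ i, u i ^ 2 = algebraMap ℝ R (eps p i)) : Dl p q →ₐ[ℝ] R :=
  AlgHom.ofLinearMap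
    { toFun := fun U => ∑ A, U A • ∏ i ∈ A, u i
      map_add' := fun X Y => by simp only [add_apply, add_smul, sum_add_distrib]
      map_smul' := fun r X => by simp only [smul_apply, mul_smul, smul_sum, RingHom.id_apply] }
    (by simp [one_apply])
    (sum_smul_prod_mul hu)

lemma lift_apply (hu : ∀ i, u i ^ 2 = algebraMap ℝ R (eps p i)) (U : Dl p q) :
    lift hu U = ∑ A, U A • ∏ i ∈ A, u i := rfl

lemma lift_e (hu : ∀ i, u i ^ 2 = algebraMap ℝ R (eps p i)) (C : Finset (Fin (p + q))) :
    lift hu (e C) = ∏ i ∈ C, u i := by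
  simp [lift_apply, e]

lemma sum_smul_map_e (φ : Dl p q →ₐ[ℝ] R) (U : Dl p q) : ∑ C, U C • φ (e C) = φ U := by
  conv_rhs => rw [← sum_smul_e U]
  simp only [map_sum, map_smul]

end Lift

def sqrtEps (p : ℕ) {n : ℕ} (i : Fin n) : ℂ := if (i : ℕ) < p then 1 else Complex.I

lemma sqrtEps_sq {n : ℕ} (i : Fin n) : sqrtEps p i ^ 2 = algebraMap ℝ ℂ (eps p i) := by
  unfold sqrtEps eps
  split_ifs <;> simp

lemma sqrtEps_ne_zero {n : ℕ} (i : Fin n) : sqrtEps p i ≠ 0 := by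
  unfold sqrtEps
  split_ifs <;> simp

def toComplex : Dl p q →ₐ[ℝ] ℂ := lift sqrtEps_sq

lemma toComplex_e_ne_zero (C : Finset (Fin (p + q))) : toComplex (e C : Dl p q) ≠ 0 := by
  rw [toComplex, lift_e]
  exact prod_ne_zero_iff.mpr fun i _ => sqrtEps_ne_zero i

lemma conjS_e (S C : Finset (Fin (p + q))) :
    conjS S (e C : Dl p q) = (-1 : ℝ) ^ (S ∩ C).card • e C := by
  funext B
  rw [conjS, smul_apply, e]
  split_ifs with h <;> simp [h]

def charMatrix (p q : ℕ) : Matrix (Finset (Fin (p + q))) (Finset (Fin (p + q))) ℂ :=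
  fun S C => toComplex (conjS S (e C))

lemma charMatrix_mul_rep (U : Dl p q) :
    charMatrix p q * (rep U).map (algebraMap ℝ ℂ)
      = Matrix.diagonal (fun S => toComplex (conjS S U)) * charMatrix p q := by
  ext S B
  have h := sum_smul_map_e (toComplex.comp (conjAlgHom S)) (U * e B)
  rw [map_mul] at h
  simp only [AlgHom.comp_apply, conjAlgHom_apply, Algebra.smul_def, Complex.coe_algebraMap] at h
  rw [Matrix.diagonal_mul, Matrix.mul_apply]
  simpa [charMatrix, rep, coeff, mul_comm] using h

lemma charMatrix_eq :
    charMatrix p q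
      = Matrix.walsh (Fin (p + q)) ℂ * Matrix.diagonal (fun C => toComplex (e C)) := by
  ext S C
  simp [Matrix.mul_diagonal, charMatrix, Matrix.walsh, conjS_e, Algebra.smul_def]

lemma det_charMatrix_ne_zero : (charMatrix p q).det ≠ 0 := by
  rw [charMatrix_eq, Matrix.det_mul, Matrix.det_diagonal]
  exact mul_ne_zero (Matrix.det_walsh_ne_zero _ _)
    (prod_ne_zero_iff.mpr fun C _ => toComplex_e_ne_zero C)

lemma det_eq_prod_toComplex_conjS (U : Dl p q) : (Det U : ℂ) = ∏ S, toComplex (conjS S U) := by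
  have h := congrArg Matrix.det (charMatrix_mul_rep U)
  rw [Matrix.det_mul, Matrix.det_mul, Matrix.det_diagonal, mul_comm,
    ← RingHom.mapMatrix_apply, ← RingHom.map_det] at h
  exact mul_right_cancel₀ det_charMatrix_ne_zero h

end Dl

/-- the product of all `2^n` conjugates of `U` is the scalar
`Det(U) = det(β(U))` times the identity. -/
theorem prod_conjugates_eq_det (p q : ℕ) (U : Dl p q) :
    ∏ A : Finset (Fin (p + q)), Dl.conjS A U = Dl.Det U • (1 : Dl p q) := by
  set P := ∏ A : Finset (Fin (p + q)), Dl.conjS A U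
  have hP : P = P ∅ • 1 := Dl.eq_smul_one_of_forall_conjS_eq (Dl.conjS_prod_conjS U)
  have hdet : ((P ∅ : ℝ) : ℂ) = Dl.Det U := by
    calc ((P ∅ : ℝ) : ℂ) = Dl.toComplex (P ∅ • 1 : Dl p q) := by simp
      _ = ∏ A, Dl.toComplex (Dl.conjS A U) := by rw [← hP, map_prod]
      _ = Dl.Det U := (Dl.det_eq_prod_toComplex_conjS U).symm
  rw [hP, Complex.ofReal_inj.mp hdet]
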